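/- For every natural number n, the identity θ1⁻ⁿ kⁿ θ1ⁿ = (k aⁿ)ⁿ holds in G. -/
import Mathlib


/-- The four generators θ₁, θ₂, a, k of the free group `F` on four letters. -/
def theta1 : FreeGroup (Fin 4) := FreeGroup.of 0
def theta2 : FreeGroup (Fin 4) := FreeGroup.of 1
def aF : FreeGroup (Fin 4) := FreeGroup.of 2
def kF : FreeGroup (Fin 4) := FreeGroup.of 3

/-- The four defining relators θᵢ⁻¹aθᵢa⁻¹ and θᵢ⁻¹kθᵢa⁻¹k⁻¹, i = 1,2. -/
def rels : Set (FreeGroup (Fin 4)) :=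
  {theta1⁻¹ * aF * theta1 * aF⁻¹, theta2⁻¹ * aF * theta2 * aF⁻¹,
   theta1⁻¹ * kF * theta1 * aF⁻¹ * kF⁻¹, theta2⁻¹ * kF * theta2 * aF⁻¹ * kF⁻¹}

/-- The group `G = ⟨θ₁, θ₂, a, k ∣ aᶿⁱ = a, kᶿⁱ = ka⟩`. -/
abbrev G : Type := PresentedGroup rels

/-- The quotient map `F → G`. -/
def π : FreeGroup (Fin 4) →* G := PresentedGroup.mk rels

lemma rel_one {r : FreeGroup (Fin 4)} (h : r ∈ rels) : π r = 1 := by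
  have : r ∈ Subgroup.normalClosure rels := Subgroup.subset_normalClosure h
  exact (QuotientGroup.eq_one_iff r).2 this

lemma conj_pow' {H : Type*} [Group H] (x y : H) (m : ℕ) :
    x⁻¹ * y ^ m * x = (x⁻¹ * y * x) ^ m := by
  have := conj_pow (i := m) (a := x⁻¹) (b := y)
  simpa using this.symm

lemma hA : (π theta1)⁻¹ * π aF * π theta1 = π aF := by
  have h := rel_one (r := theta1⁻¹ * aF * theta1 * aF⁻¹) (by simp [rels])
  simp only [map_mul, map_inv] at h
  rwa [mul_inv_eq_one] at h

lemma hK : (π theta1)⁻¹ * π kF * π theta1 = π kF * π aF := by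
  have h := rel_one (r := theta1⁻¹ * kF * theta1 * aF⁻¹ * kF⁻¹) (by simp [rels])
  simp only [map_mul, map_inv] at h
  rw [mul_inv_eq_one, mul_inv_eq_iff_eq_mul] at h
  exact h

lemma hconj (n : ℕ) : (π theta1)⁻¹ ^ n * π kF * π theta1 ^ n = π kF * π aF ^ n := by
  induction n with
  | zero => simp
  | succ m ih =>
    have hA' : (π theta1)⁻¹ * π aF ^ m * π theta1 = π aF ^ m := by
      rw [conj_pow', hA]
    calc (π theta1)⁻¹ ^ (m+1) * π kF * π theta1 ^ (m+1)
        = (π theta1)⁻¹ * ((π theta1)⁻¹ ^ m * π kF * π theta1 ^ m) * π theta1 := by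
          rw [pow_succ, pow_succ']; group
      _ = (π theta1)⁻¹ * (π kF * π aF ^ m) * π theta1 := by rw [ih]
      _ = ((π theta1)⁻¹ * π kF * π theta1) * ((π theta1)⁻¹ * π aF ^ m * π theta1) := by group
      _ = π kF * π aF ^ (m+1) := by rw [hK, hA', pow_succ]; group

/-- For every `n`: `θ₁⁻ⁿ kⁿ θ₁ⁿ = (k aⁿ)ⁿ` in `G`. -/
theorem theta_conj_kpow (n : ℕ) :
    (π theta1 ^ n)⁻¹ * π kF ^ n * π theta1 ^ n = (π kF * π aF ^ n) ^ n := by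
  rw [← hconj n, inv_pow]
  exact conj_pow' _ _ _
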